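/- Let h1, h2 : D → D be injective holomorphic maps from the open unit disc into itself such that the closures of h1(D) and h2(D) are disjoint compact subsets of D. Then for every infinite sequence I = (i_n) ∈ {1,2}^ℕ, the nested intersection ⋂_{n≥1} h_{i1} ∘ ... ∘ h_{in}(D) consists of exactly one point. -/

import Mathlib

open Metric

/-- Composition `h_{i₁} ∘ ... ∘ h_{iₙ}` along a finite word in `{1,2}`. -/
def compWord (h : Fin 2 → ℂ → ℂ) : List (Fin 2) → ℂ → ℂ
  | [] => id
  | i :: w => h i ∘ compWord h w

/-- The composition `h_{I 0} ∘ ... ∘ h_{I (n-1)}` along the length-`n` prefix of an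
infinite word `I`. -/
def prefixComp (h : Fin 2 → ℂ → ℂ) (I : ℕ → Fin 2) (n : ℕ) : ℂ → ℂ :=
  compWord h (List.ofFn fun k : Fin n => I k)

/-! Both images lie in a disc `|z| < r` with `r < 1`, so by the Schwarz–Pick lemma each `h i`
contracts the hyperbolic metric of the unit disc by the factor `r`. A composition of `n` maps
therefore contracts it by `r ^ n`, and on `|z| < r` the hyperbolic and Euclidean metrics are
comparable: the nested images have diameters `O(r ^ n)`. Since the closure of each image lies in
the previous one, a Cantor intersection argument leaves exactly one point. -/

open ComplexConjugate Topology

noncomputable def mobius (a z : ℂ) : ℂ := (a - z) / (1 - conj a * z)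

lemma one_sub_conj_mul_ne_zero {a z : ℂ} (ha : ‖a‖ < 1) (hz : ‖z‖ < 1) :
    1 - conj a * z ≠ 0 := by
  have : ‖conj a * z‖ < 1 := by
    rw [norm_mul, Complex.norm_conj]
    nlinarith [norm_nonneg a, norm_nonneg z]
  intro h
  rw [show conj a * z = 1 by linear_combination -h, norm_one] at this
  exact this.false

lemma sq_norm_one_sub_conj_mul_sub_sq_norm_sub (a z : ℂ) :
    ‖1 - conj a * z‖ ^ 2 - ‖a - z‖ ^ 2 = (1 - ‖a‖ ^ 2) * (1 - ‖z‖ ^ 2) := by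
  simp only [Complex.sq_norm, Complex.normSq_apply, Complex.mul_re, Complex.mul_im,
    Complex.conj_re, Complex.conj_im, Complex.sub_re, Complex.sub_im, Complex.one_re,
    Complex.one_im]
  ring

lemma norm_mobius_lt_one {a z : ℂ} (ha : ‖a‖ < 1) (hz : ‖z‖ < 1) : ‖mobius a z‖ < 1 := by
  have hd := norm_pos_iff.mpr (one_sub_conj_mul_ne_zero ha hz)
  rw [mobius, norm_div, div_lt_one hd, ← sq_lt_sq₀ (norm_nonneg _) hd.le, ← sub_pos,
    sq_norm_one_sub_conj_mul_sub_sq_norm_sub]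
  have := norm_nonneg a; have := norm_nonneg z
  apply mul_pos <;> nlinarith

lemma mapsTo_mobius {a : ℂ} (ha : ‖a‖ < 1) : Set.MapsTo (mobius a) (ball 0 1) (ball 0 1) :=
  fun _ hz ↦ mem_ball_zero_iff.mpr (norm_mobius_lt_one ha (mem_ball_zero_iff.mp hz))

@[simp] lemma mobius_zero_right (a : ℂ) : mobius a 0 = a := by simp [mobius]

@[simp] lemma mobius_self (a : ℂ) : mobius a a = 0 := by simp [mobius]

lemma hasDerivAt_mobius {a z : ℂ} (hz : 1 - conj a * z ≠ 0) :
    HasDerivAt (mobius a) ((‖a‖ ^ 2 - 1 : ℝ) / (1 - conj a * z) ^ 2) z := by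
  have hnum : HasDerivAt (fun w ↦ a - w) (-1) z := (hasDerivAt_id z).const_sub a
  have hden : HasDerivAt (fun w ↦ 1 - conj a * w) (-conj a) z := by
    simpa using ((hasDerivAt_id z).const_mul (conj a)).const_sub 1
  refine (hnum.div hden hz).congr_deriv ?_
  push_cast
  rw [← Complex.mul_conj']
  ring

lemma hasDerivAt_mobius_zero (a : ℂ) : HasDerivAt (mobius a) (-(1 - ‖a‖ ^ 2 : ℝ)) 0 := by
  convert hasDerivAt_mobius (a := a) (z := 0) (by simp) using 1
  push_cast; ring

lemma hasDerivAt_mobius_self {a : ℂ} (ha : ‖a‖ < 1) :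
    HasDerivAt (mobius a) (-(1 - ‖a‖ ^ 2 : ℝ)⁻¹) a := by
  convert hasDerivAt_mobius (one_sub_conj_mul_ne_zero ha ha) using 1
  have : (1 - ‖a‖ ^ 2 : ℂ) ≠ 0 := by
    exact_mod_cast (show (1 - ‖a‖ ^ 2 : ℝ) ≠ 0 by nlinarith [norm_nonneg a])
  rw [Complex.conj_mul']
  push_cast
  field_simp
  ring

/-- Schwarz–Pick lemma, infinitesimal form. -/
theorem norm_deriv_mul_one_sub_sq_le {f : ℂ → ℂ} (hf : DifferentiableOn ℂ f (ball 0 1))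
    (hmaps : Set.MapsTo f (ball 0 1) (ball 0 1)) {a : ℂ} (ha : a ∈ ball (0 : ℂ) 1) :
    ‖deriv f a‖ * (1 - ‖a‖ ^ 2) ≤ 1 - ‖f a‖ ^ 2 := by
  set b := f a
  have ha' : ‖a‖ < 1 := mem_ball_zero_iff.mp ha
  have hb : ‖b‖ < 1 := mem_ball_zero_iff.mp (hmaps ha)
  -- conjugating by disc automorphisms moves `a ↦ b` to `0 ↦ 0`, where the Schwarz lemma applies
  set g := mobius b ∘ f ∘ mobius a
  have hg_maps : Set.MapsTo g (ball 0 1) (ball 0 1) :=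
    (mapsTo_mobius hb).comp (hmaps.comp (mapsTo_mobius ha'))
  have hg_diff : DifferentiableOn ℂ g (ball 0 1) := by
    intro z hz
    have hz' := mapsTo_mobius ha' hz
    have hfz := hmaps hz'
    refine DifferentiableAt.differentiableWithinAt ?_
    refine (hasDerivAt_mobius (one_sub_conj_mul_ne_zero hb (mem_ball_zero_iff.mp hfz)))
      |>.differentiableAt.comp z ?_
    exact (hf.differentiableAt (isOpen_ball.mem_nhds hz')).comp z
      (hasDerivAt_mobius (one_sub_conj_mul_ne_zero ha' (mem_ball_zero_iff.mp hz))).differentiableAt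
  have hg_deriv : HasDerivAt g
      (-(1 - ‖b‖ ^ 2 : ℝ)⁻¹ * (deriv f a * -(1 - ‖a‖ ^ 2 : ℝ))) 0 := by
    have hfa : HasDerivAt f (deriv f a) (mobius a 0) := by
      rw [mobius_zero_right]
      exact (hf.differentiableAt (isOpen_ball.mem_nhds ha)).hasDerivAt
    have hb' : HasDerivAt (mobius b) (-(1 - ‖b‖ ^ 2 : ℝ)⁻¹) (f (mobius a 0)) := by
      rw [mobius_zero_right]
      exact hasDerivAt_mobius_self hb
    exact hb'.comp 0 (hfa.comp 0 (hasDerivAt_mobius_zero a))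
  have hschwarz : ‖deriv g 0‖ ≤ 1 / 1 := by
    refine Complex.norm_deriv_le_div_of_mapsTo_ball hg_diff ?_ one_pos
    have hg0 : g 0 = 0 := by simp [g, b]
    rw [hg0]
    exact hg_maps.mono_right ball_subset_closedBall
  have hb2 : 0 < 1 - ‖b‖ ^ 2 := by nlinarith [norm_nonneg b]
  have ha2 : 0 ≤ 1 - ‖a‖ ^ 2 := by nlinarith [norm_nonneg a]
  rw [hg_deriv.deriv, norm_mul, norm_mul, norm_neg, norm_neg, Complex.norm_real,
    Complex.norm_real, Real.norm_of_nonneg (inv_nonneg.mpr hb2.le), Real.norm_of_nonneg ha2,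
    div_one, inv_mul_le_iff₀ hb2, mul_one] at hschwarz
  exact hschwarz

theorem norm_deriv_mul_one_sub_sq_le_mul {f : ℂ → ℂ} {r : ℝ} (hr : r ≤ 1)
    (hf : DifferentiableOn ℂ f (ball 0 1)) (hmaps : Set.MapsTo f (ball 0 1) (ball 0 r))
    {a : ℂ} (ha : a ∈ ball (0 : ℂ) 1) :
    ‖deriv f a‖ * (1 - ‖a‖ ^ 2) ≤ r * (1 - ‖f a‖ ^ 2) := by
  have hfa : ‖f a‖ < r := mem_ball_zero_iff.mp (hmaps ha)
  have hr0 : 0 < r := pos_of_mem_ball (hmaps ha)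
  have hrC : (r : ℂ) ≠ 0 := by exact_mod_cast hr0.ne'
  have hg_maps : Set.MapsTo (fun z ↦ (r : ℂ)⁻¹ * f z) (ball 0 1) (ball 0 1) := by
    intro z hz
    rw [mem_ball_zero_iff, norm_mul, norm_inv, Complex.norm_real, Real.norm_of_nonneg hr0.le,
      inv_mul_lt_one₀ hr0]
    exact mem_ball_zero_iff.mp (hmaps hz)
  have key := norm_deriv_mul_one_sub_sq_le (hf.const_mul _) hg_maps ha
  rw [deriv_const_mul _ (hf.differentiableAt (isOpen_ball.mem_nhds ha)), norm_mul, norm_mul,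
    norm_inv, Complex.norm_real, Real.norm_of_nonneg hr0.le] at key
  have hfa2 : r * ‖f a‖ ^ 2 ≤ ‖f a‖ ^ 2 / r := by
    rw [le_div_iff₀ hr0]
    nlinarith [sq_nonneg ‖f a‖, mul_le_one₀ hr hr0.le hr]
  calc ‖deriv f a‖ * (1 - ‖a‖ ^ 2) = r * (r⁻¹ * ‖deriv f a‖ * (1 - ‖a‖ ^ 2)) := by
        field_simp
    _ ≤ r * (1 - (r⁻¹ * ‖f a‖) ^ 2) := mul_le_mul_of_nonneg_left key hr0.le
    _ = r - ‖f a‖ ^ 2 / r := by field_simp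
    _ ≤ r * (1 - ‖f a‖ ^ 2) := by linarith

section Words

variable {h : Fin 2 → ℂ → ℂ}

lemma compWord_append (w₁ w₂ : List (Fin 2)) :
    compWord h (w₁ ++ w₂) = compWord h w₁ ∘ compWord h w₂ := by
  induction w₁ with
  | nil => rfl
  | cons i w ih => simp only [List.cons_append, compWord, ih, Function.comp_assoc]

lemma prefixComp_succ (I : ℕ → Fin 2) (n : ℕ) :
    prefixComp h I (n + 1) = prefixComp h I n ∘ h (I n) := by
  simp only [prefixComp, List.ofFn_succ', List.concat_eq_append, compWord_append]
  rfl

lemma mapsTo_compWord (hmaps : ∀ i, Set.MapsTo (h i) (ball 0 1) (ball 0 1)) :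
    ∀ w, Set.MapsTo (compWord h w) (ball 0 1) (ball 0 1)
  | [] => Set.mapsTo_id _
  | i :: w => (hmaps i).comp (mapsTo_compWord hmaps w)

lemma differentiableOn_compWord (hhol : ∀ i, DifferentiableOn ℂ (h i) (ball 0 1))
    (hmaps : ∀ i, Set.MapsTo (h i) (ball 0 1) (ball 0 1)) :
    ∀ w, DifferentiableOn ℂ (compWord h w) (ball 0 1)
  | [] => differentiableOn_id
  | i :: w => (hhol i).comp (differentiableOn_compWord hhol hmaps w) (mapsTo_compWord hmaps w)

variable {r : ℝ}

theorem norm_deriv_compWord_mul_le (hr : r ≤ 1) (hhol : ∀ i, DifferentiableOn ℂ (h i) (ball 0 1))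
    (hmaps : ∀ i, Set.MapsTo (h i) (ball 0 1) (ball 0 r)) (w : List (Fin 2)) {z : ℂ}
    (hz : z ∈ ball (0 : ℂ) 1) :
    ‖deriv (compWord h w) z‖ * (1 - ‖z‖ ^ 2) ≤ r ^ w.length * (1 - ‖compWord h w z‖ ^ 2) := by
  have hmaps₁ i := (hmaps i).mono_right (ball_subset_ball hr)
  induction w with
  | nil => simp [compWord]
  | cons i w ih =>
    have hwz := mapsTo_compWord hmaps₁ w hz
    have hchain : deriv (compWord h (i :: w)) z = deriv (h i) (compWord h w z) *
        deriv (compWord h w) z :=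
      deriv_comp z ((hhol i).differentiableAt (isOpen_ball.mem_nhds hwz))
        ((differentiableOn_compWord hhol hmaps₁ w).differentiableAt (isOpen_ball.mem_nhds hz))
    calc ‖deriv (compWord h (i :: w)) z‖ * (1 - ‖z‖ ^ 2)
        = ‖deriv (h i) (compWord h w z)‖ * (‖deriv (compWord h w) z‖ * (1 - ‖z‖ ^ 2)) := by
          rw [hchain, norm_mul, mul_assoc]
      _ ≤ ‖deriv (h i) (compWord h w z)‖ * (r ^ w.length * (1 - ‖compWord h w z‖ ^ 2)) := by
          gcongr
      _ = r ^ w.length * (‖deriv (h i) (compWord h w z)‖ * (1 - ‖compWord h w z‖ ^ 2)) := by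
          ring
      _ ≤ r ^ w.length * (r * (1 - ‖h i (compWord h w z)‖ ^ 2)) := by
          have hr0 : 0 ≤ r := (pos_of_mem_ball (hmaps i hz)).le
          exact mul_le_mul_of_nonneg_left
            (norm_deriv_mul_one_sub_sq_le_mul hr (hhol i) (hmaps i) hwz) (pow_nonneg hr0 _)
      _ = r ^ (i :: w).length * (1 - ‖compWord h (i :: w) z‖ ^ 2) := by
          simp only [List.length_cons, compWord, Function.comp_apply]
          ring

/-- On `ball 0 r` the Euclidean and hyperbolic metrics are comparable, so the hyperbolic
contraction by `r ^ |w|` becomes a Euclidean Lipschitz bound. -/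
theorem norm_compWord_sub_le (hr : r < 1) (hhol : ∀ i, DifferentiableOn ℂ (h i) (ball 0 1))
    (hmaps : ∀ i, Set.MapsTo (h i) (ball 0 1) (ball 0 r)) (w : List (Fin 2)) {x y : ℂ}
    (hx : x ∈ ball (0 : ℂ) r) (hy : y ∈ ball (0 : ℂ) r) :
    ‖compWord h w x - compWord h w y‖ ≤ r ^ w.length / (1 - r ^ 2) * ‖x - y‖ := by
  have hsub : ball (0 : ℂ) r ⊆ ball 0 1 := ball_subset_ball hr.le
  have hdiff := differentiableOn_compWord hhol (fun i ↦ (hmaps i).mono_right hsub) w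
  refine Convex.norm_image_sub_le_of_norm_deriv_le
    (fun z hz ↦ hdiff.differentiableAt (isOpen_ball.mem_nhds (hsub hz))) (fun z hz ↦ ?_)
    (convex_ball _ _) hy hx
  have hz : ‖z‖ < r := mem_ball_zero_iff.mp hz
  have hr0 : 0 ≤ r := (norm_nonneg z).trans hz.le
  have hr2 : 0 < 1 - r ^ 2 := by nlinarith
  rw [le_div_iff₀ hr2]
  calc ‖deriv (compWord h w) z‖ * (1 - r ^ 2) ≤ ‖deriv (compWord h w) z‖ * (1 - ‖z‖ ^ 2) := by
        gcongr
    _ ≤ r ^ w.length * (1 - ‖compWord h w z‖ ^ 2) :=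
        norm_deriv_compWord_mul_le hr.le hhol hmaps w (hsub (mem_ball_zero_iff.mpr hz))
    _ ≤ r ^ w.length := by
        have := sq_nonneg ‖compWord h w z‖
        have := pow_nonneg hr0 w.length
        nlinarith

end Words

theorem exists_lt_forall_mapsTo_ball {ι X Y : Type*} [Finite ι] [MetricSpace X] [ProperSpace X]
    {f : ι → Y → X} {s : Set Y} {x : X} {R : ℝ} (hcl : ∀ i, closure (f i '' s) ⊆ ball x R) :
    ∃ r < R, ∀ i, Set.MapsTo (f i) s (ball x r) := by
  obtain ⟨r, hrR, hr⟩ := exists_lt_subset_ball (isClosed_iUnion_of_finite fun i ↦ isClosed_closure)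
    (Set.iUnion_subset hcl)
  exact ⟨r, hrR, fun i ↦ Set.mapsTo_iff_image_subset.mpr
    (subset_closure.trans ((Set.subset_iUnion _ i).trans hr))⟩

/-- Cantor's intersection theorem, with an explicit bound `ε` on distances in place of the
diameter (which is junk-valued on unbounded sets). -/
theorem existsUnique_forall_mem_of_closure_succ_subset {X : Type*} [MetricSpace X]
    [CompleteSpace X] {S : ℕ → Set X} {ε : ℕ → ℝ} (hne : ∀ n, (S n).Nonempty)
    (hsub : ∀ n, closure (S (n + 1)) ⊆ S n) (hdist : ∀ n, ∀ x ∈ S n, ∀ y ∈ S n, dist x y ≤ ε n)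
    (hε : Filter.Tendsto ε Filter.atTop (𝓝 0)) :
    ∃! p, ∀ n, p ∈ S n := by
  have hanti : Antitone S := antitone_nat_of_succ_le fun n ↦ subset_closure.trans (hsub n)
  choose x hx using hne
  have hcauchy : CauchySeq x := cauchySeq_of_le_tendsto_0 ε
    (fun m k n hm hk ↦ hdist n _ (hanti hm (hx m)) _ (hanti hk (hx k))) hε
  obtain ⟨p, hp⟩ := cauchySeq_tendsto_of_complete hcauchy
  have hpS : ∀ n, p ∈ S n := fun n ↦ hsub n (mem_closure_of_tendsto hp
    ((Filter.eventually_ge_atTop (n + 1)).mono fun m hm ↦ hanti hm (hx m)))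
  exact ⟨p, hpS, fun q hq ↦ dist_le_zero.mp
    (ge_of_tendsto hε (.of_forall fun n ↦ hdist n q (hq n) p (hpS n)))⟩

section Prefixes

variable {h : Fin 2 → ℂ → ℂ} {r : ℝ} (I : ℕ → Fin 2) (n : ℕ)

lemma image_prefixComp_succ_subset (hmaps : ∀ i, Set.MapsTo (h i) (ball 0 1) (ball 0 r)) :
    prefixComp h I (n + 1) '' ball 0 1 ⊆ prefixComp h I n '' ball 0 r := by
  rw [prefixComp_succ, Set.image_comp]
  exact Set.image_mono (hmaps _).image_subset

lemma closure_image_prefixComp_succ_subset (hr : r < 1)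
    (hhol : ∀ i, DifferentiableOn ℂ (h i) (ball 0 1))
    (hmaps : ∀ i, Set.MapsTo (h i) (ball 0 1) (ball 0 r)) :
    closure (prefixComp h I (n + 1) '' ball 0 1) ⊆ prefixComp h I n '' ball 0 1 := by
  have hcont : ContinuousOn (prefixComp h I n) (closedBall 0 r) :=
    (differentiableOn_compWord hhol (fun i ↦ (hmaps i).mono_right (ball_subset_ball hr.le))
      _).continuousOn.mono (closedBall_subset_ball hr)
  calc closure (prefixComp h I (n + 1) '' ball 0 1)
      ⊆ prefixComp h I n '' closedBall 0 r :=
        closure_minimal ((image_prefixComp_succ_subset I n hmaps).trans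
          (Set.image_mono ball_subset_closedBall))
          ((isCompact_closedBall 0 r).image_of_continuousOn hcont).isClosed
    _ ⊆ prefixComp h I n '' ball 0 1 := Set.image_mono (closedBall_subset_ball hr)

lemma dist_le_of_mem_image_prefixComp_succ (hr : r < 1)
    (hhol : ∀ i, DifferentiableOn ℂ (h i) (ball 0 1))
    (hmaps : ∀ i, Set.MapsTo (h i) (ball 0 1) (ball 0 r)) {x y : ℂ}
    (hx : x ∈ prefixComp h I (n + 1) '' ball 0 1) (hy : y ∈ prefixComp h I (n + 1) '' ball 0 1) :
    dist x y ≤ r ^ n / (1 - r ^ 2) * 2 := by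
  obtain ⟨a, ha, rfl⟩ := image_prefixComp_succ_subset I n hmaps hx
  obtain ⟨b, hb, rfl⟩ := image_prefixComp_succ_subset I n hmaps hy
  have hab : ‖a - b‖ ≤ 2 := by
    have := mem_ball_zero_iff.mp ha; have := mem_ball_zero_iff.mp hb
    linarith [norm_sub_le a b]
  have hr0 : 0 ≤ r := (pos_of_mem_ball ha).le
  have hr2 : 0 < 1 - r ^ 2 := by nlinarith
  calc dist (prefixComp h I n a) (prefixComp h I n b)
      ≤ r ^ n / (1 - r ^ 2) * ‖a - b‖ := by
        simpa [dist_eq_norm, prefixComp] using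
          norm_compWord_sub_le hr hhol hmaps (List.ofFn fun k : Fin n ↦ I k) ha hb
    _ ≤ r ^ n / (1 - r ^ 2) * 2 := by gcongr

end Prefixes

theorem nested_intersection_is_singleton_general
    (h : Fin 2 → ℂ → ℂ)
    (hhol : ∀ i, DifferentiableOn ℂ (h i) (ball (0 : ℂ) 1))
    (hcl : ∀ i, closure (h i '' ball (0 : ℂ) 1) ⊆ ball (0 : ℂ) 1) :
    ∀ I : ℕ → Fin 2,
      ∃! p : ℂ, p ∈ ⋂ (n : ℕ) (_ : 1 ≤ n), prefixComp h I n '' ball (0 : ℂ) 1 := by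
  intro I
  obtain ⟨r, hr, hmaps⟩ := exists_lt_forall_mapsTo_ball hcl
  have hmem : ∀ p, p ∈ ⋂ (n : ℕ) (_ : 1 ≤ n), prefixComp h I n '' ball (0 : ℂ) 1 ↔
      ∀ n, p ∈ prefixComp h I (n + 1) '' ball (0 : ℂ) 1 := by
    simp only [Set.mem_iInter]
    exact fun p ↦ ⟨fun hp n ↦ hp (n + 1) n.succ_pos,
      fun hp n hn ↦ Nat.succ_pred_eq_of_pos hn ▸ hp (n - 1)⟩
  have hε : Filter.Tendsto (fun n ↦ r ^ n / (1 - r ^ 2) * 2) Filter.atTop (𝓝 0) := by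
    have hr0 : 0 ≤ r := (pos_of_mem_ball (hmaps 0 (mem_ball_self one_pos))).le
    simpa using ((tendsto_pow_atTop_nhds_zero_of_lt_one hr0 hr).div_const (1 - r ^ 2)).mul_const 2
  simp_rw [hmem]
  exact existsUnique_forall_mem_of_closure_succ_subset
    (fun n ↦ (nonempty_ball.mpr one_pos).image _)
    (fun n ↦ closure_image_prefixComp_succ_subset I (n + 1) hr hhol hmaps)
    (fun n _ hx _ hy ↦ dist_le_of_mem_image_prefixComp_succ I n hr hhol hmaps hx hy) hε

/-- If `h₁, h₂ : D → D` are injective holomorphic self-maps of the unit disc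
whose images have disjoint closures contained in `D`, then for every infinite sequence
`I ∈ {1,2}^ℕ` the nested intersection `⋂_{n≥1} h_{i₁}∘...∘h_{iₙ}(D)` is a single point. -/
theorem nested_intersection_is_singleton
    (h : Fin 2 → ℂ → ℂ)
    (hhol : ∀ i, DifferentiableOn ℂ (h i) (ball (0 : ℂ) 1))
    (hinj : ∀ i, Set.InjOn (h i) (ball (0 : ℂ) 1))
    (hmaps : ∀ i, Set.MapsTo (h i) (ball (0 : ℂ) 1) (ball (0 : ℂ) 1))
    (hcl : ∀ i, closure (h i '' ball (0 : ℂ) 1) ⊆ ball (0 : ℂ) 1)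
    (hdisj : closure (h 0 '' ball (0 : ℂ) 1) ∩ closure (h 1 '' ball (0 : ℂ) 1) = ∅) :
    ∀ I : ℕ → Fin 2,
      ∃! p : ℂ, p ∈ ⋂ (n : ℕ) (_ : 1 ≤ n), prefixComp h I n '' ball (0 : ℂ) 1 :=
  nested_intersection_is_singleton_general h hhol hcl
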